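/- Let f: ℝⁿ → ℝ have a locally Lipschitz gradient and compact sublevel sets, and suppose f is a Morse function (all critical points are nondegenerate, hence isolated). Then any global solution q(t) of the gradient flow q̇ = -∇f(q) converges as t → ∞ to some critical point q_c of f, i.e., lim_{t→∞} q(t) = q_c with ∇f(q_c) = 0. -/

import Mathlib

open Filter Set Metric

section Aux

variable {n : ℕ}

/-- f ∘ q has derivative -‖∇f(q t)‖² along the flow. -/
lemma aux_flow_deriv (f : EuclideanSpace ℝ (Fin n) → ℝ) (hf : ContDiff ℝ 2 f)
    (q : ℝ → EuclideanSpace ℝ (Fin n)) (t : ℝ)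
    (hq : HasDerivAt q (-(gradient f (q t))) t) :
    HasDerivAt (fun s => f (q s)) (-‖gradient f (q t)‖^2) t := by
  have hg : HasGradientAt f (gradient f (q t)) (q t) :=
    ((hf.differentiable (by norm_num)) (q t)).hasGradientAt
  have h2 := hg.hasFDerivAt.comp_hasDerivAt t hq
  refine HasDerivAt.congr_deriv h2 ?_
  rw [show ((InnerProductSpace.toDual ℝ (EuclideanSpace ℝ (Fin n))) (gradient f (q t)))
      (-gradient f (q t))
      = @inner ℝ _ _ (gradient f (q t)) (-gradient f (q t)) from rfl, inner_neg_right,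
    real_inner_self_eq_norm_sq]

/-- Nondegenerate critical points are isolated. -/
lemma aux_isolated (f : EuclideanSpace ℝ (Fin n) → ℝ) (hf : ContDiff ℝ 2 f)
    (p : EuclideanSpace ℝ (Fin n)) (hp : gradient f p = 0)
    (hb : Function.Bijective (fderiv ℝ (gradient f) p)) :
    ∀ᶠ x in nhds p, gradient f x = 0 → x = p := by
  have hg1 : ContDiff ℝ 1 (gradient f) := by
    have h1 : ContDiff ℝ 1 (fderiv ℝ f) := hf.fderiv_right (by norm_num)
    exact (InnerProductSpace.toDual ℝ (EuclideanSpace ℝ (Fin n))).symm.contDiff.comp h1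
  set L := fderiv ℝ (gradient f) p with hL
  let e : EuclideanSpace ℝ (Fin n) ≃L[ℝ] EuclideanSpace ℝ (Fin n) :=
    (LinearEquiv.ofBijective
      (L : EuclideanSpace ℝ (Fin n) →ₗ[ℝ] EuclideanSpace ℝ (Fin n)) hb).toContinuousLinearEquiv
  have hstrict : HasStrictFDerivAt (gradient f) (e : EuclideanSpace ℝ (Fin n) →L[ℝ]
      EuclideanSpace ℝ (Fin n)) p := by
    have : (e : EuclideanSpace ℝ (Fin n) →L[ℝ] EuclideanSpace ℝ (Fin n)) = L := by
      ext x; rfl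
    rw [this]
    exact hg1.contDiffAt.hasStrictFDerivAt one_ne_zero
  filter_upwards [hstrict.eventually_left_inverse] with x hx hx0
  have hxp := hx
  rw [hx0, ← hp] at hxp
  rw [← hxp]
  simpa [hp] using hstrict.localInverse_apply_image

end Aux



/-- Let `f : ℝⁿ → ℝ` have a locally Lipschitz gradient and compact
sublevel sets, and suppose `f` is a Morse function (twice differentiable with
invertible Hessian at every critical point, hence isolated critical points). Then any
global solution `q(t)` of the gradient flow `q̇ = -∇f(q)` converges as `t → ∞` to some
critical point `q_c` of `f`. -/
theorem gradient_flow_converges_to_critical_point (n : ℕ)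
    (f : EuclideanSpace ℝ (Fin n) → ℝ) (hf : ContDiff ℝ 2 f)
    (hlip : LocallyLipschitz (gradient f))
    (hcpt : ∀ c : ℝ, IsCompact {q : EuclideanSpace ℝ (Fin n) | f q ≤ c})
    (hmorse : ∀ q : EuclideanSpace ℝ (Fin n), gradient f q = 0 →
      Function.Bijective (fderiv ℝ (gradient f) q))
    (q : ℝ → EuclideanSpace ℝ (Fin n))
    (hq : ∀ t ∈ Set.Ici (0 : ℝ), HasDerivAt q (-(gradient f (q t))) t) :
    ∃ qc : EuclideanSpace ℝ (Fin n), gradient f qc = 0 ∧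
      Filter.Tendsto q Filter.atTop (nhds qc) := by
  have hgc : Continuous (gradient f) := hlip.continuous
  have hderiv : ∀ t ∈ Ici (0:ℝ), HasDerivAt (fun s => f (q s)) (-‖gradient f (q t)‖^2) t :=
    fun t ht => aux_flow_deriv f hf q t (hq t ht)
  -- f ∘ q is antitone on [0, ∞)
  have hanti : AntitoneOn (fun s => f (q s)) (Ici 0) := by
    apply antitoneOn_of_deriv_nonpos (convex_Ici 0)
    · exact fun t ht => (hderiv t ht).continuousAt.continuousWithinAt
    · intro t ht
      rw [interior_Ici] at ht
      exact ((hderiv t (le_of_lt (mem_Ioi.mp ht))).differentiableAt).differentiableWithinAt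
    · intro t ht
      rw [interior_Ici] at ht
      rw [(hderiv t (le_of_lt (mem_Ioi.mp ht))).deriv]
      exact neg_nonpos.mpr (sq_nonneg _)
  set K := {x : EuclideanSpace ℝ (Fin n) | f x ≤ f (q 0)} with hKdef
  have hKc : IsCompact K := hcpt _
  have hqK : ∀ t, 0 ≤ t → q t ∈ K := fun t ht => hanti self_mem_Ici ht ht
  -- lower bound b on f over K
  obtain ⟨b, hb⟩ : ∃ b, ∀ x ∈ K, b ≤ f x := by
    rcases (hKc.image hf.continuous).bddBelow with ⟨b, hb⟩
    exact ⟨b, fun x hx => hb (Set.mem_image_of_mem f hx)⟩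
  -- the limit L of f ∘ q
  set g : ℝ → ℝ := fun t => f (q (max t 0)) with hgdef
  have hganti : Antitone g := by
    intro s t hst
    exact hanti (le_max_right s 0) (le_max_right t 0) (max_le_max hst le_rfl)
  have hgbdd : BddBelow (Set.range g) := by
    refine ⟨b, fun y hy => ?_⟩
    rcases hy with ⟨t, rfl⟩
    exact hb _ (hqK _ (le_max_right t 0))
  set L := ⨅ t, g t with hLdef
  have hgL : Tendsto g atTop (nhds L) := tendsto_atTop_ciInf hganti hgbdd
  have hL : Tendsto (fun t => f (q t)) atTop (nhds L) := by
    refine hgL.congr' ?_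
    filter_upwards [eventually_ge_atTop (0:ℝ)] with t ht
    simp [hgdef, max_eq_left ht]
  have hLle : ∀ t, 0 ≤ t → L ≤ f (q t) := by
    intro t ht
    have h : L ≤ g t := ciInf_le hgbdd t
    simpa [hgdef, sup_eq_left.mpr ht] using h
  -- bound on the gradient over K
  obtain ⟨M, hM0, hM⟩ : ∃ M, 0 < M ∧ ∀ x ∈ K, ‖gradient f x‖ ≤ M := by
    rcases (hKc.image (continuous_norm.comp hgc)).bddAbove with ⟨C, hC⟩
    exact ⟨max C 1, lt_of_lt_of_le one_pos (le_max_right _ _),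
      fun x hx => le_trans (hC (Set.mem_image_of_mem _ hx)) (le_max_left _ _)⟩
  -- movement bound
  have hmove : ∀ a bb : ℝ, 0 ≤ a → a ≤ bb → dist (q bb) (q a) ≤ M * (bb - a) := by
    intro a bb ha hab
    rw [dist_eq_norm]
    have := norm_image_sub_le_of_norm_deriv_le_segment'
      (f := q) (f' := fun t => -(gradient f (q t))) (a := a) (b := bb)
      (fun x hx => (hq x (le_trans ha hx.1)).hasDerivWithinAt)
      (fun x hx => by
        rw [norm_neg]
        exact hM _ (hqK x (le_trans ha hx.1)))
    exact this bb (Set.right_mem_Icc.mpr hab)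
  -- every cluster point of the trajectory is a critical point
  have hcrit : ∀ p, MapClusterPt p atTop q → gradient f p = 0 := by
    intro p hcl
    by_contra hne
    set eps := ‖gradient f p‖ with hepsdef
    have heps : 0 < eps := norm_pos_iff.mpr hne
    -- neighborhood where gradient is large
    obtain ⟨d0, hd0, hball⟩ : ∃ d0 > 0, ∀ x, dist x p < d0 → eps / 2 ≤ ‖gradient f x‖ := by
      have hc : ContinuousAt (fun x => ‖gradient f x‖) p := (continuous_norm.comp hgc).continuousAt
      rcases Metric.continuousAt_iff.mp hc (eps/2) (by positivity) with ⟨d0, hd0, hd⟩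
      refine ⟨d0, hd0, fun x hx => ?_⟩
      have := hd hx
      rw [Real.dist_eq] at this
      have := abs_lt.mp this
      linarith [this.1]
    set del := d0 / (2 * M) with hdeldef
    have hdel : 0 < del := by positivity
    set c := del * (eps^2/4) with hcdef
    have hc0 : 0 < c := by positivity
    -- pick a good time t0
    have hfreq : ∃ᶠ t in atTop, dist (q t) p < d0/2 := by
      have := (mapClusterPt_iff_frequently.mp hcl) (Metric.ball p (d0/2))
        (Metric.ball_mem_nhds p (by positivity))
      simpa [Metric.mem_ball] using this
    have hev : ∀ᶠ t in atTop, f (q t) < L + c ∧ 0 ≤ t := by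
      refine Filter.Eventually.and ?_ (eventually_ge_atTop 0)
      exact hL (Iio_mem_nhds (by linarith))
    obtain ⟨t0, hnear, hfless, ht0⟩ : ∃ t0, dist (q t0) p < d0/2 ∧ f (q t0) < L + c ∧ 0 ≤ t0 := by
      rcases (hfreq.and_eventually hev).exists with ⟨t0, h1, h2, h3⟩
      exact ⟨t0, h1, h2, h3⟩
    -- on [t0, t0 + del] the trajectory stays in the ball
    have hstay : ∀ s ∈ Set.Icc t0 (t0 + del), dist (q s) p < d0 := by
      intro s hs
      have h1 : dist (q s) (q t0) ≤ M * (s - t0) := hmove t0 s ht0 hs.1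
      have h2 : M * (s - t0) ≤ M * del := by
        apply mul_le_mul_of_nonneg_left _ (le_of_lt hM0)
        linarith [hs.2]
      have h3 : M * del = d0 / 2 := by
        rw [hdeldef]; field_simp
      calc dist (q s) p ≤ dist (q s) (q t0) + dist (q t0) p := dist_triangle _ _ _
        _ < d0/2 + d0/2 := by linarith
        _ = d0 := by ring
    -- the auxiliary function h decreases
    have hdec : f (q (t0 + del)) + eps^2/4 * (t0 + del) ≤ f (q t0) + eps^2/4 * t0 := by
      have hantih : AntitoneOn (fun s => f (q s) + eps^2/4 * s) (Set.Icc t0 (t0 + del)) := by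
        apply antitoneOn_of_deriv_nonpos (convex_Icc _ _)
        · intro s hs
          exact (((hderiv s (le_trans ht0 hs.1)).continuousAt).add
            (continuousAt_const.mul continuousAt_id)).continuousWithinAt
        · intro s hs
          rw [interior_Icc] at hs
          exact (((hderiv s (le_trans ht0 (le_of_lt hs.1))).differentiableAt).add
            ((differentiable_const _).mul differentiable_id).differentiableAt).differentiableWithinAt
        · intro s hs
          rw [interior_Icc] at hs
          have hds : HasDerivAt (fun s => f (q s) + eps^2/4 * s)
              (-‖gradient f (q s)‖^2 + eps^2/4) s := by
            exact (hderiv s (le_trans ht0 (le_of_lt hs.1))).add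
              ((hasDerivAt_id s).const_mul (eps^2/4) |>.congr_deriv (by ring))
          rw [hds.deriv]
          have hqs : eps/2 ≤ ‖gradient f (q s)‖ :=
            hball _ (hstay s (Set.mem_Icc.mpr ⟨le_of_lt hs.1, le_of_lt hs.2⟩))
          nlinarith [hqs, heps]
      exact hantih (Set.left_mem_Icc.mpr (by linarith)) (Set.right_mem_Icc.mpr (by linarith))
        (by linarith)
    have hlow : L ≤ f (q (t0 + del)) := hLle _ (by linarith)
    have : f (q (t0 + del)) ≤ f (q t0) - c := by
      have : eps^2/4 * (t0 + del) - eps^2/4 * t0 = c := by rw [hcdef]; ring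
      linarith [hdec]
    linarith
  -- existence of a cluster point
  have hKev : ∀ᶠ t in atTop, q t ∈ K := by
    filter_upwards [eventually_ge_atTop (0:ℝ)] with t ht using hqK t ht
  obtain ⟨p, hpK, hpcl⟩ : ∃ p ∈ K, MapClusterPt p atTop q := by
    have hne : (Filter.map q atTop ⊓ Filter.principal K).NeBot := by
      rw [Filter.inf_principal_neBot_iff]
      intro U hU
      rcases (Filter.Eventually.and (Filter.mem_map.mp hU : ∀ᶠ t in atTop, q t ∈ U) hKev).exists with ⟨t, h1, h2⟩
      exact ⟨q t, h1, h2⟩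
    rcases hKc.exists_clusterPt (f := Filter.map q atTop ⊓ Filter.principal K) inf_le_right with ⟨p, hpK, hp⟩
    exact ⟨p, hpK, hp.mono inf_le_left⟩
  have hpcrit : gradient f p = 0 := hcrit p hpcl
  refine ⟨p, hpcrit, ?_⟩
  by_contra hnt
  -- extract a frequent escape distance
  obtain ⟨eps, heps, hfar⟩ : ∃ eps > 0, ∃ᶠ t in atTop, eps ≤ dist (q t) p := by
    rw [Metric.tendsto_nhds] at hnt
    push_neg at hnt
    rcases hnt with ⟨eps, heps, hfr⟩
    refine ⟨eps, heps, ?_⟩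
    exact hfr
  obtain ⟨del, hdel, hiso⟩ : ∃ del > 0, ∀ x, dist x p < del → gradient f x = 0 → x = p := by
    rcases Metric.eventually_nhds_iff.mp (aux_isolated f hf p hpcrit (hmorse p hpcrit)) with
      ⟨del, hdel, hd⟩
    exact ⟨del, hdel, fun x hx => hd hx⟩
  set r := min eps del / 2 with hrdef
  have hr : 0 < r := by positivity
  have hrd : r < del := by
    have := min_le_right eps del
    have : min eps del / 2 ≤ del / 2 := by linarith
    simp only [hrdef]
    linarith
  have hfar' : ∃ᶠ t in atTop, r ≤ dist (q t) p := by
    refine hfar.mono (fun t ht => le_trans ?_ ht)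
    have := min_le_left eps del
    simp only [hrdef]
    linarith
  have hnear : ∃ᶠ t in atTop, dist (q t) p < r/2 := by
    have := (mapClusterPt_iff_frequently.mp hpcl) (Metric.ball p (r/2))
      (Metric.ball_mem_nhds p (by positivity))
    simpa [Metric.mem_ball] using this
  -- frequently the trajectory is exactly at distance 3r/4
  have hmid : ∃ᶠ t in atTop, dist (q t) p = 3*r/4 ∧ 0 ≤ t := by
    rw [Filter.frequently_atTop]
    intro a
    obtain ⟨t1, ht1a, ht1⟩ := Filter.frequently_atTop.mp hnear (max a 0)
    obtain ⟨t2, ht2a, ht2⟩ := Filter.frequently_atTop.mp hfar' t1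
    have ht10 : (0:ℝ) ≤ t1 := le_trans (le_max_right a 0) ht1a
    have hcont : ContinuousOn (fun s => dist (q s) p) (Set.Icc t1 t2) := by
      intro s hs
      exact (Continuous.dist continuous_id continuous_const).continuousAt.comp
        ((hq s (le_trans ht10 hs.1)).continuousAt) |>.continuousWithinAt
    have hivt := intermediate_value_Icc ht2a hcont
    have hmem : (3*r/4) ∈ Set.Icc (dist (q t1) p) (dist (q t2) p) := by
      constructor <;> [linarith; linarith]
    rcases hivt hmem with ⟨s, hs, hsd⟩
    exact ⟨s, le_trans (le_trans (le_max_left a 0) ht1a) hs.1, hsd,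
      le_trans ht10 hs.1⟩
  -- a cluster point on the sphere of radius 3r/4
  set A := K ∩ {x | dist x p = 3*r/4} with hAdef
  have hAc : IsCompact A := hKc.inter_right
    (isClosed_eq (Continuous.dist continuous_id continuous_const) continuous_const)
  obtain ⟨p', hp'A, hp'cl⟩ : ∃ p' ∈ A, MapClusterPt p' atTop q := by
    have hne : (Filter.map q atTop ⊓ Filter.principal A).NeBot := by
      rw [Filter.inf_principal_neBot_iff]
      intro U hU
      rcases (Filter.Eventually.and_frequently (Filter.mem_map.mp hU : ∀ᶠ t in atTop, q t ∈ U) hmid).exists with ⟨t, h1, h2, h3⟩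
      exact ⟨q t, h1, hqK t h3, h2⟩
    rcases hAc.exists_clusterPt (f := Filter.map q atTop ⊓ Filter.principal A) inf_le_right with ⟨p', hp'A, hp'⟩
    exact ⟨p', hp'A, hp'.mono inf_le_left⟩
  have hp'crit : gradient f p' = 0 := hcrit p' hp'cl
  have hp'd : dist p' p = 3*r/4 := hp'A.2
  have : p' = p := hiso p' (by rw [hp'd]; linarith) hp'crit
  rw [this, dist_self] at hp'd
  linarith
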